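/- arXiv:1712.02255 — 5 statements merged into one kernel-verified Lean document; each statement's English description precedes it below -/
import Mathlib

section
/- For every real number w > 0 with w ≠ 1, one has w/(1-w)^2 - 1/(log w)^2 = 2 · ∑_{n=1}^∞ ((log w)^2 - 4π²n²)/((log w)^2 + 4π²n²)². -/
/-!
The periodic extension of `x ↦ (c + x) e^{s x}` from `[0, 1)`, with `c = e^s / (1 - e^s)`, is
continuous, and its `n`-th Fourier coefficient is `(1 - e^s) / (s - 2πin)²`. These are absolutely
summable, so the Fourier series converges at `0` to the value `c`, which gives
`∑_{n ∈ ℤ} (s - 2πin)⁻² = e^s / (1 - e^s)²`. For real `s = log w` the terms `±n` pair up to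
`2 (s² - 4π²n²) / (s² + 4π²n²)²`, and the term `n = 0` is `1 / (log w)²`.
-/

open Real

open Complex

lemma hasDerivAt_add_div_sub_mul_cexp (c s z : ℂ) (hs : s ≠ 0) :
    HasDerivAt (fun y : ℂ => ((c + y) / s - 1 / s ^ 2) * cexp (s * y))
      ((c + z) * cexp (s * z)) z :=
  (((((hasDerivAt_id' z).const_add c).div_const s).sub_const (1 / s ^ 2)).fun_mul
    (((hasDerivAt_id' z).const_mul s).cexp)).congr_deriv (by field_simp; ring)

lemma integral_add_mul_cexp (c s : ℂ) (hs : s ≠ 0) :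
    ∫ x in (0 : ℝ)..1, (c + x) * cexp (s * x) =
      ((c + 1) / s - 1 / s ^ 2) * cexp s - (c / s - 1 / s ^ 2) := by
  rw [intervalIntegral.integral_eq_sub_of_hasDerivAt
    (fun x _ => (hasDerivAt_add_div_sub_mul_cexp c s x hs).comp_ofReal)
    (by apply Continuous.intervalIntegrable; fun_prop)]
  simp

/-- The constant `exp s / (1 - exp s)` is the one for which the values at `0` and `1` agree. -/
noncomputable def affineExp (s : ℂ) (x : ℝ) : ℂ := (cexp s / (1 - cexp s) + x) * cexp (s * x)

lemma affineExp_zero_eq_one {s : ℂ} (hs : cexp s ≠ 1) : affineExp s 0 = affineExp s 1 := by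
  have : 1 - cexp s ≠ 0 := sub_ne_zero.mpr hs.symm
  simp only [affineExp, ofReal_zero, ofReal_one, mul_zero, mul_one, add_zero, Complex.exp_zero]
  field_simp
  ring

noncomputable def affineExpCircle {s : ℂ} (hs : cexp s ≠ 1) : C(UnitAddCircle, ℂ) :=
  ⟨AddCircle.liftIco 1 0 (affineExp s),
    AddCircle.liftIco_zero_continuous (affineExp_zero_eq_one hs) (by unfold affineExp; fun_prop)⟩

lemma affineExpCircle_zero {s : ℂ} (hs : cexp s ≠ 1) :
    affineExpCircle hs 0 = cexp s / (1 - cexp s) := by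
  show AddCircle.liftIco 1 0 (affineExp s) ((0 : ℝ) : UnitAddCircle) = _
  rw [AddCircle.liftIco_zero_coe_apply (by simp)]
  simp [affineExp]

lemma fourierCoeff_affineExpCircle {s : ℂ} (hs : cexp s ≠ 1) (n : ℤ) :
    fourierCoeff (affineExpCircle hs) n = (1 - cexp s) / (s - 2 * π * I * n) ^ 2 := by
  set t := s - 2 * π * I * n
  have hexp : cexp t = cexp s := by
    rw [Complex.exp_sub, show 2 * π * I * n = n * (2 * π * I) by ring,
      Complex.exp_int_mul_two_pi_mul_I, div_one]
  have ht : t ≠ 0 := by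
    rintro h
    rw [h, Complex.exp_zero] at hexp
    exact hs hexp.symm
  have hs' : 1 - cexp s ≠ 0 := sub_ne_zero.mpr hs.symm
  have hintegrand (x : ℝ) : fourier (-n) (x : AddCircle ((0 : ℝ) + 1 - 0)) • affineExp s x =
      (cexp s / (1 - cexp s) + x) * cexp (t * x) := by
    rw [fourier_coe_apply, smul_eq_mul, affineExp, mul_left_comm, ← Complex.exp_add]
    congr 2
    push_cast
    ring
  rw [show ⇑(affineExpCircle hs) = AddCircle.liftIco 1 0 (affineExp s) from rfl,
    fourierCoeff_liftIco_eq, fourierCoeffOn_eq_integral]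
  simp only [hintegrand, zero_add, sub_zero, div_one, one_smul]
  rw [integral_add_mul_cexp _ _ ht, hexp]
  field_simp
  ring

lemma summable_inv_sub_two_pi_I_mul_sq (s : ℂ) :
    Summable fun n : ℤ => ((s - 2 * π * I * n) ^ 2)⁻¹ := by
  have hπ : (π : ℂ) ≠ 0 := ofReal_ne_zero.mpr pi_ne_zero
  refine ((EisensteinSeries.linear_right_summable (s / (2 * π * I)) (-1) le_rfl).mul_left
    (-1 / (4 * π ^ 2) : ℂ)).congr fun n => ?_
  simp only [Int.cast_neg, Int.cast_one, zpow_ofNat, ← inv_pow]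
  field_simp
  ring_nf
  simp

theorem hasSum_inv_sub_two_pi_I_mul_sq {s : ℂ} (hs : cexp s ≠ 1) :
    HasSum (fun n : ℤ => ((s - 2 * π * I * n) ^ 2)⁻¹) (cexp s / (1 - cexp s) ^ 2) := by
  have hs' : 1 - cexp s ≠ 0 := sub_ne_zero.mpr hs.symm
  have hcoeff : fourierCoeff (affineExpCircle hs) =
      fun n : ℤ => (1 - cexp s) * ((s - 2 * π * I * n) ^ 2)⁻¹ :=
    funext fun n => by rw [fourierCoeff_affineExpCircle, div_eq_mul_inv]
  have hsum := has_pointwise_sum_fourier_series_of_summable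
    (hcoeff ▸ (summable_inv_sub_two_pi_I_mul_sq s).mul_left _) 0
  simp only [hcoeff, fourier_eval_zero, smul_eq_mul, mul_one, affineExpCircle_zero] at hsum
  have := hsum.mul_left (1 - cexp s)⁻¹
  simp only [inv_mul_cancel_left₀ hs'] at this
  rwa [inv_mul_eq_div, div_div, ← sq] at this

lemma inv_sub_mul_I_sq_add_inv_add_mul_I_sq (a b : ℝ) :
    ((a - b * I) ^ 2)⁻¹ + ((a + b * I) ^ 2)⁻¹ =
      ((2 * (a ^ 2 - b ^ 2) / (a ^ 2 + b ^ 2) ^ 2 : ℝ) : ℂ) := by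
  have hmul : (a : ℂ) ^ 2 + b ^ 2 = (a - b * I) * (a + b * I) := by
    linear_combination (b : ℂ) ^ 2 * I_sq
  rcases eq_or_ne (a ^ 2 + b ^ 2) 0 with h | h
  · obtain ⟨rfl, rfl⟩ : a = 0 ∧ b = 0 := by constructor <;> nlinarith [sq_nonneg a, sq_nonneg b]
    simp
  obtain ⟨h₁, h₂⟩ : (a : ℂ) - b * I ≠ 0 ∧ (a : ℂ) + b * I ≠ 0 := by
    rw [← mul_ne_zero_iff, ← hmul]; exact_mod_cast h
  push_cast
  rw [hmul]
  field_simp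
  ring_nf
  rw [I_sq]
  ring

theorem hasSum_sq_sub_div_sq_add_sq {L : ℝ} (hL : L ≠ 0) :
    HasSum (fun n : ℕ => 2 * ((L ^ 2 - 4 * π ^ 2 * ((n : ℝ) + 1) ^ 2) /
      (L ^ 2 + 4 * π ^ 2 * ((n : ℝ) + 1) ^ 2) ^ 2))
      (Real.exp L / (1 - Real.exp L) ^ 2 - 1 / L ^ 2) := by
  have hexp : cexp L ≠ 1 := by
    rw [← ofReal_exp, ← ofReal_one, Ne, ofReal_inj, Real.exp_eq_one_iff]; exact hL
  have hpair (n : ℕ) : ((L - 2 * π * I * ((n + 1 : ℕ) : ℤ)) ^ 2)⁻¹ +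
      ((L - 2 * π * I * ((-((n + 1 : ℕ) : ℤ) : ℤ) : ℂ)) ^ 2)⁻¹ =
      ((2 * ((L ^ 2 - 4 * π ^ 2 * ((n : ℝ) + 1) ^ 2) /
        (L ^ 2 + 4 * π ^ 2 * ((n : ℝ) + 1) ^ 2) ^ 2) : ℝ) : ℂ) := by
    convert inv_sub_mul_I_sq_add_inv_add_mul_I_sq L (2 * π * (n + 1)) using 1
    · push_cast; ring_nf
    · congr 1; ring
  have hsum := (hasSum_inv_sub_two_pi_I_mul_sq hexp).nat_add_neg
  rw [← hasSum_nat_add_iff' 1] at hsum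
  simp only [hpair, Finset.sum_range_one, Nat.cast_zero, Int.cast_zero, neg_zero, mul_zero,
    sub_zero] at hsum
  rw [show Real.exp L / (1 - Real.exp L) ^ 2 - 1 / L ^ 2 =
    Real.exp L / (1 - Real.exp L) ^ 2 + (L ^ 2)⁻¹ - ((L ^ 2)⁻¹ + (L ^ 2)⁻¹) by ring]
  exact_mod_cast hsum

theorem zeta_series_identity (w : ℝ) (hw : 0 < w) (hw1 : w ≠ 1) :
    w / (1 - w) ^ 2 - 1 / (Real.log w) ^ 2 =
      2 * ∑' n : ℕ, ((Real.log w) ^ 2 - 4 * π ^ 2 * ((n : ℝ) + 1) ^ 2) /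
        ((Real.log w) ^ 2 + 4 * π ^ 2 * ((n : ℝ) + 1) ^ 2) ^ 2 := by
  have hlog : Real.log w ≠ 0 := Real.log_ne_zero_of_pos_of_ne_one hw hw1
  rw [← tsum_mul_left, (hasSum_sq_sub_div_sq_add_sq hlog).tsum_eq, Real.exp_log hw]
end

section
/- For every natural number m ≥ 1 and every real c > 0, the 2m-th derivative at x = 0 of the function x ↦ (x² - c)/(x² + c)² equals (-1)^{m+1} · (2m+1)! / c^{m+1}. -/
open Real

/-!
With `q = -x² / c` one has `(x² - c) / (x² + c)² = -c⁻¹ (1 + q) / (1 - q)²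
= -c⁻¹ ∑ₖ (2k + 1) qᵏ` for `x² < c`. So near `0` the function is an even power series whose
`2k`-th coefficient is `(-1)^(k+1) (2k + 1) / c^(k+1)`, and its `2m`-th derivative at `0` is `(2m)!`
times that coefficient.
-/

open FormalMultilinearSeries

theorem HasFPowerSeriesAt.iteratedDeriv_eq_factorial_mul {𝕜 : Type*} [NontriviallyNormedField 𝕜]
    [CompleteSpace 𝕜] [CharZero 𝕜] {f : 𝕜 → 𝕜} {a : ℕ → 𝕜} {x : 𝕜}
    (hf : HasFPowerSeriesAt f (ofScalars 𝕜 a) x) (n : ℕ) :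
    iteratedDeriv n f x = n.factorial * a n := by
  rw [ofScalars_series_injective 𝕜 𝕜
    (hf.eq_formalMultilinearSeries hf.analyticAt.hasFPowerSeriesAt)]
  exact (mul_div_cancel₀ _ (Nat.cast_ne_zero.2 n.factorial_ne_zero)).symm

theorem hasSum_two_mul_add_one_mul_geometric {𝕜 : Type*} [NormedField 𝕜] {q : 𝕜} (hq : ‖q‖ < 1) :
    HasSum (fun k : ℕ => (2 * k + 1) * q ^ k) ((1 + q) / (1 - q) ^ 2) := by
  have hq1 : 1 - q ≠ 0 := sub_ne_zero.2 fun h => by simp [← h] at hq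
  convert! ((hasSum_coe_mul_geometric_of_norm_lt_one hq).mul_left 2).add
    (hasSum_geometric_of_norm_lt_one hq) using 1
  · ext k
    ring
  · field_simp
    ring

noncomputable def hCoeff (c : ℝ) (n : ℕ) : ℝ :=
  if Even n then (-1) ^ (n / 2 + 1) * (2 * (n / 2) + 1) / c ^ (n / 2 + 1) else 0

theorem hCoeff_two_mul (c : ℝ) (k : ℕ) :
    hCoeff c (2 * k) = (-1) ^ (k + 1) * (2 * k + 1) / c ^ (k + 1) := by
  simp [hCoeff]

theorem hCoeff_two_mul_add_one (c : ℝ) (k : ℕ) : hCoeff c (2 * k + 1) = 0 := by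
  simp [hCoeff]

theorem hCoeff_two_mul_mul_pow {c : ℝ} (hc : c ≠ 0) (y : ℝ) (k : ℕ) :
    hCoeff c (2 * k) * y ^ (2 * k) = -c⁻¹ * ((2 * k + 1) * (-(y ^ 2 / c)) ^ k) := by
  rw [hCoeff_two_mul, neg_pow (y ^ 2 / c), div_pow, pow_mul]
  field_simp
  ring

theorem hasSum_hCoeff_mul_pow {c y : ℝ} (hc : 0 < c) (hy : y ^ 2 < c) :
    HasSum (fun n => hCoeff c n * y ^ n) ((y ^ 2 - c) / (y ^ 2 + c) ^ 2) := by
  have hq : ‖-(y ^ 2 / c)‖ < 1 := by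
    rw [norm_neg, Real.norm_of_nonneg (by positivity), div_lt_one hc]
    exact hy
  have heven : HasSum (fun k => hCoeff c (2 * k) * y ^ (2 * k))
      (-c⁻¹ * ((1 + -(y ^ 2 / c)) / (1 - -(y ^ 2 / c)) ^ 2)) := by
    simp_rw [hCoeff_two_mul_mul_pow hc.ne']
    exact (hasSum_two_mul_add_one_mul_geometric hq).mul_left _
  have hodd : HasSum (fun k => hCoeff c (2 * k + 1) * y ^ (2 * k + 1)) 0 := by
    simp_rw [hCoeff_two_mul_add_one, zero_mul]
    exact hasSum_zero
  convert HasSum.even_add_odd (f := fun n => hCoeff c n * y ^ n) heven hodd using 1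
  have hyc : y ^ 2 + c ≠ 0 := by positivity
  rw [add_zero, sub_neg_eq_add]
  field_simp
  ring

theorem summable_norm_hCoeff_mul_pow {c y : ℝ} (hc : 0 < c) (hy : y ^ 2 < c) :
    Summable (fun n => ‖hCoeff c n * y ^ n‖) := by
  have hq : ‖y ^ 2 / c‖ < 1 := by
    rw [Real.norm_of_nonneg (by positivity), div_lt_one hc]
    exact hy
  have hnorm (k : ℕ) :
      ‖hCoeff c (2 * k) * y ^ (2 * k)‖ = c⁻¹ * ((2 * k + 1) * (y ^ 2 / c) ^ k) := by
    rw [hCoeff_two_mul_mul_pow hc.ne', norm_mul, norm_mul, norm_neg, norm_pow, norm_neg, norm_inv,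
      Real.norm_of_nonneg hc.le, Real.norm_of_nonneg (by positivity : (0 : ℝ) ≤ 2 * k + 1),
      Real.norm_of_nonneg (by positivity : 0 ≤ y ^ 2 / c)]
  have heven : Summable (fun k => ‖hCoeff c (2 * k) * y ^ (2 * k)‖) := by
    simp_rw [hnorm]
    exact ((hasSum_two_mul_add_one_mul_geometric hq).mul_left _).summable
  have hodd : Summable (fun k => ‖hCoeff c (2 * k + 1) * y ^ (2 * k + 1)‖) := by
    simp_rw [hCoeff_two_mul_add_one, zero_mul, norm_zero]
    exact summable_zero
  exact Summable.even_add_odd (f := fun n => ‖hCoeff c n * y ^ n‖) heven hodd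

theorem hasFPowerSeriesOnBall_hCoeff {c : ℝ} (hc : 0 < c) :
    HasFPowerSeriesOnBall (fun x : ℝ => (x ^ 2 - c) / (x ^ 2 + c) ^ 2) (ofScalars ℝ (hCoeff c)) 0
      (ENNReal.ofReal √c) where
  r_le := by
    refine ENNReal.le_of_forall_nnreal_lt fun r hr => le_radius_of_summable _ ?_
    have hr : (r : ℝ) ^ 2 < c := (Real.lt_sqrt r.2).1 (by simpa using hr)
    simpa [ofScalars_norm, norm_mul, norm_pow] using summable_norm_hCoeff_mul_pow hc hr
  r_pos := by simpa using hc
  hasSum := by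
    intro y hy
    have hy : y ^ 2 < c := by
      rw [← sq_abs, ← Real.lt_sqrt (abs_nonneg y)]
      simpa using hy
    simp only [ofScalars_apply_eq, smul_eq_mul, zero_add]
    exact hasSum_hCoeff_mul_pow hc hy

theorem iteratedDeriv_h_general (m : ℕ) (c : ℝ) (hc : 0 < c) :
    iteratedDeriv (2 * m) (fun x : ℝ => (x ^ 2 - c) / (x ^ 2 + c) ^ 2) 0 =
      (-1) ^ (m + 1) * ((2 * m + 1).factorial : ℝ) / c ^ (m + 1) := by
  rw [(hasFPowerSeriesOnBall_hCoeff hc).hasFPowerSeriesAt.iteratedDeriv_eq_factorial_mul,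
    hCoeff_two_mul, Nat.factorial_succ]
  push_cast
  field_simp

theorem iteratedDeriv_h (m : ℕ) (hm : 1 ≤ m) (c : ℝ) (hc : 0 < c) :
    iteratedDeriv (2 * m) (fun x : ℝ => (x ^ 2 - c) / (x ^ 2 + c) ^ 2) 0 =
      (-1) ^ (m + 1) * ((2 * m + 1).factorial : ℝ) / c ^ (m + 1) :=
  iteratedDeriv_h_general m c hc
end

section
/- In a neighborhood of z = 0, the function z ↦ e^{2πz}/(e^{2πz} - 1)² - 1/(2πz)² (extended by its removable singularity at 0) has Taylor expansion -∑_{k=0}^∞ B_{k+2} (2π)^k z^k / (k! · (k+2)), where B_j are the Bernoulli numbers. -/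
/-!
Let `B = ∑ Bₙ Xⁿ / n!`, so that `B · (eˣ - 1) = X`. Differentiating gives
`(eˣ - 1)² (B - X B') = X² eˣ`, the formal version of
`w² eʷ / (eʷ - 1)² = -w² d/dw (B(w) / w)`, and `B - X B' = 1 - X² D` where `D` is the claimed
series. Since `B` is the inverse of `(eˣ - 1) / X`, whose coefficients are at most `1`,
`|Bₙ / n!| ≤ 2ⁿ`; hence all series involved converge absolutely for `|w| < 1/2`, where
evaluation is a ring homomorphism, and the formal identity becomes the analytic one at `w = 2πz`.
-/

open Finset PowerSeries

theorem PowerSeries.norm_coeff_le_two_pow_of_mul_eq_one {R : Type*} [NormedRing R] [NormOneClass R]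
    {P U : R⟦X⟧} (hPU : P * U = 1) (hU₀ : constantCoeff U = 1) (hU : ∀ n, ‖coeff n U‖ ≤ 1)
    (n : ℕ) : ‖coeff n P‖ ≤ 2 ^ n := by
  induction n using Nat.strong_induction_on with
  | _ n ih =>
  have hrec : coeff n P = coeff n (1 : R⟦X⟧) - ∑ k ∈ range n, coeff k P * coeff (n - k) U := by
    have h := congrArg (coeff n) hPU
    rw [coeff_mul, Nat.sum_antidiagonal_eq_sum_range_succ (fun i j => coeff i P * coeff j U),
      sum_range_succ, Nat.sub_self, coeff_zero_eq_constantCoeff_apply, hU₀, mul_one] at h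
    rw [← h, add_sub_cancel_left]
  have hone : ‖coeff n (1 : R⟦X⟧)‖ ≤ 1 := by
    rw [coeff_one]; split_ifs <;> simp
  calc ‖coeff n P‖ ≤ ‖coeff n (1 : R⟦X⟧)‖ + ∑ k ∈ range n, ‖coeff k P‖ * ‖coeff (n - k) U‖ := by
        rw [hrec]
        refine (norm_sub_le _ _).trans (add_le_add_right ((norm_sum_le _ _).trans ?_) _)
        exact sum_le_sum fun k _ => norm_mul_le _ _
    _ ≤ 1 + ∑ k ∈ range n, 2 ^ k * 1 := by
        gcongr with k hk
        · exact ih k (mem_range.mp hk)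
        · exact hU _
    _ = 2 ^ n := by
        have := geom_sum_mul_add (1 : ℝ) n
        norm_num at this
        simp only [mul_one]
        linarith

theorem norm_coeff_bernoulliPowerSeries_le (n : ℕ) :
    ‖coeff n (bernoulliPowerSeries ℂ)‖ ≤ 2 ^ n := by
  set U : ℂ⟦X⟧ := mk fun p => coeff (p + 1) (exp ℂ)
  have hBU : bernoulliPowerSeries ℂ * U = 1 := by
    apply mul_X_cancel
    rw [mul_assoc, ← sub_const_eq_shift_mul_X, constantCoeff_exp, map_one,
      bernoulliPowerSeries_mul_exp_sub_one, one_mul]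
  have hU : ∀ p, ‖coeff p U‖ ≤ 1 := fun p => by
    simp only [U, coeff_mk, coeff_exp, map_div₀, map_one, map_natCast, norm_div, norm_one,
      Complex.norm_natCast]
    exact div_le_one_of_le₀ (mod_cast Nat.one_le_iff_ne_zero.mpr (Nat.factorial_ne_zero _))
      (Nat.cast_nonneg _)
  exact norm_coeff_le_two_pow_of_mul_eq_one hBU (by simp [U]) hU n

section BernoulliTail

variable (A : Type*) [CommRing A] [Algebra ℚ A]

/-- The expansion of `1 / w ^ 2 - e ^ w / (e ^ w - 1) ^ 2` at `0`. -/
noncomputable def bernoulliTailSeries : A⟦X⟧ :=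
  mk fun k => algebraMap ℚ A (bernoulli (k + 2) / (k.factorial * (k + 2)))

theorem coeff_bernoulliTailSeries (k : ℕ) :
    coeff k (bernoulliTailSeries A) = (k + 1) * coeff (k + 2) (bernoulliPowerSeries A) := by
  rw [bernoulliTailSeries, bernoulliPowerSeries, coeff_mk, coeff_mk,
    show (k + 1 : A) = algebraMap ℚ A (k + 1) by simp, ← map_mul]
  congr 1
  rw [Nat.factorial_succ, Nat.factorial_succ]
  push_cast
  field_simp
  ring

theorem bernoulliPowerSeries_sub_X_mul_derivative :
    bernoulliPowerSeries A - X * d⁄dX A (bernoulliPowerSeries A) =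
      1 - X ^ 2 * bernoulliTailSeries A := by
  ext (_ | _ | k)
  · simp [bernoulliPowerSeries]
  · simp [bernoulliPowerSeries, coeff_one, coeff_derivative, coeff_X_pow_mul']
  · rw [map_sub, map_sub, coeff_succ_X_mul, coeff_derivative, coeff_one, if_neg (by omega),
      pow_two, mul_assoc, coeff_succ_X_mul, coeff_succ_X_mul, coeff_bernoulliTailSeries]
    push_cast
    ring

theorem exp_sub_one_sq_mul_one_sub_X_sq_mul_bernoulliTailSeries :
    (exp A - 1) ^ 2 * (1 - X ^ 2 * bernoulliTailSeries A) = X ^ 2 * exp A := by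
  set B := bernoulliPowerSeries A
  have h₁ : B * (exp A - 1) = X := bernoulliPowerSeries_mul_exp_sub_one A
  have h₂ : B * exp A + (exp A - 1) * d⁄dX A B = 1 := by
    simpa [derivative_exp] using congrArg (d⁄dX A) h₁
  rw [← bernoulliPowerSeries_sub_X_mul_derivative]
  linear_combination ((exp A - 1) + X * exp A) * h₁ - X * (exp A - 1) * h₂

end BernoulliTail

namespace PowerSeries

variable {R : Type*} [NormedCommRing R]

theorem coeff_mul_mul_pow (F G : R⟦X⟧) (w : R) (n : ℕ) :
    coeff n (F * G) * w ^ n =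
      ∑ kl ∈ antidiagonal n, coeff kl.1 F * w ^ kl.1 * (coeff kl.2 G * w ^ kl.2) := by
  rw [coeff_mul, sum_mul]
  refine sum_congr rfl fun kl hkl => ?_
  rw [← mem_antidiagonal.mp hkl, pow_add]
  ring

theorem summable_norm_coeff_mul_pow_of_coeff_eq_zero_of_ne {F : R⟦X⟧} (w : R) (N : ℕ)
    (hF : ∀ n ≠ N, coeff n F = 0) : Summable fun n => ‖coeff n F * w ^ n‖ :=
  (hasSum_single N fun n hn => by rw [hF n hn, zero_mul, norm_zero]).summable

def absConvSubring (w : R) : Subring R⟦X⟧ where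
  carrier := {F | Summable fun n => ‖coeff n F * w ^ n‖}
  mul_mem' {F G} hF hG := by
    simpa only [Set.mem_ofPred_eq, coeff_mul_mul_pow] using
      summable_norm_sum_mul_antidiagonal_of_summable_norm hF hG
  one_mem' := summable_norm_coeff_mul_pow_of_coeff_eq_zero_of_ne w 0 fun n hn => by
    rw [coeff_one, if_neg hn]
  add_mem' {F G} hF hG := by
    refine (hF.add hG).of_nonneg_of_le (fun _ => norm_nonneg _) fun n => ?_
    rw [map_add, add_mul]
    exact norm_add_le _ _
  zero_mem' := by simp
  neg_mem' {F} hF := by simpa using hF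

theorem X_mem_absConvSubring (w : R) : X ∈ absConvSubring w :=
  summable_norm_coeff_mul_pow_of_coeff_eq_zero_of_ne w 1 fun n hn => by rw [coeff_X, if_neg hn]

variable [CompleteSpace R]

noncomputable def tsumEval (w : R) : absConvSubring w →+* R where
  toFun F := ∑' n, coeff n (F : R⟦X⟧) * w ^ n
  map_one' := by
    rw [Subring.coe_one, tsum_eq_single 0 fun n hn => by rw [coeff_one, if_neg hn, zero_mul]]
    simp
  map_mul' F G := by
    rw [tsum_mul_tsum_eq_tsum_sum_antidiagonal_of_summable_norm F.2 G.2]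
    simp only [Subring.coe_mul, coeff_mul_mul_pow]
  map_zero' := by simp
  map_add' F G := by
    simp only [Subring.coe_add, map_add, add_mul]
    exact F.2.of_norm.tsum_add G.2.of_norm

theorem tsumEval_apply (w : R) (F : absConvSubring w) :
    tsumEval w F = ∑' n, coeff n (F : R⟦X⟧) * w ^ n := rfl

theorem tsumEval_X (w : R) : tsumEval w ⟨X, X_mem_absConvSubring w⟩ = w := by
  rw [tsumEval_apply, tsum_eq_single 1 fun n hn => by rw [coeff_X, if_neg hn, zero_mul]]
  simp

theorem exp_mem_absConvSubring (w : ℂ) : exp ℂ ∈ absConvSubring w := by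
  refine (Real.summable_pow_div_factorial ‖w‖).congr fun n => ?_
  simp [coeff_exp, norm_pow, div_eq_inv_mul]

theorem tsumEval_exp (w : ℂ) : tsumEval w ⟨exp ℂ, exp_mem_absConvSubring w⟩ = Complex.exp w := by
  rw [tsumEval_apply, Complex.exp_eq_exp_ℂ, ← (NormedSpace.expSeries_div_hasSum_exp w).tsum_eq]
  simp [coeff_exp, div_eq_inv_mul]

end PowerSeries

theorem bernoulliTailSeries_mem_absConvSubring {w : ℂ} (hw : ‖w‖ < 1 / 2) :
    bernoulliTailSeries ℂ ∈ absConvSubring w := by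
  have hr : ‖2 * ‖w‖‖ < 1 := by rw [Real.norm_of_nonneg (by positivity)]; linarith
  have hsum : Summable fun k : ℕ => 4 * ((k : ℝ) ^ 1 * (2 * ‖w‖) ^ k + (2 * ‖w‖) ^ k) :=
    ((summable_pow_mul_geometric_of_norm_lt_one 1 hr).add
      (summable_geometric_of_lt_one (by positivity) (by simpa using hr))).mul_left 4
  refine hsum.of_nonneg_of_le (fun _ => norm_nonneg _) fun k => ?_
  have hk : ‖(k + 1 : ℂ)‖ = k + 1 := mod_cast Complex.norm_natCast (k + 1)
  rw [coeff_bernoulliTailSeries, norm_mul, norm_mul, norm_pow, hk]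
  calc (k + 1) * ‖coeff (k + 2) (bernoulliPowerSeries ℂ)‖ * ‖w‖ ^ k
      ≤ (k + 1) * 2 ^ (k + 2) * ‖w‖ ^ k := by
        gcongr
        exact norm_coeff_bernoulliPowerSeries_le _
    _ = 4 * ((k : ℝ) ^ 1 * (2 * ‖w‖) ^ k + (2 * ‖w‖) ^ k) := by ring

theorem exp_sub_one_sq_mul_one_sub_sq_mul_tsum_bernoulliTailSeries {w : ℂ} (hw : ‖w‖ < 1 / 2) :
    (Complex.exp w - 1) ^ 2 * (1 - w ^ 2 * ∑' k, coeff k (bernoulliTailSeries ℂ) * w ^ k) =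
      w ^ 2 * Complex.exp w := by
  set E : absConvSubring w := ⟨exp ℂ, exp_mem_absConvSubring w⟩
  set Y : absConvSubring w := ⟨X, X_mem_absConvSubring w⟩
  set D : absConvSubring w := ⟨bernoulliTailSeries ℂ, bernoulliTailSeries_mem_absConvSubring hw⟩
  have h : (E - 1) ^ 2 * (1 - Y ^ 2 * D) = Y ^ 2 * E :=
    Subtype.ext (by simpa using exp_sub_one_sq_mul_one_sub_X_sq_mul_bernoulliTailSeries ℂ)
  have := congrArg (tsumEval w) h
  rwa [map_mul, map_mul, map_pow, map_sub, map_sub, map_mul, map_pow, map_one, tsumEval_X,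
    tsumEval_exp, tsumEval_apply w D] at this

theorem exp_div_exp_sub_one_sq_sub_one_div_sq {w : ℂ} (hw : ‖w‖ < 1 / 2) (hw₀ : w ≠ 0) :
    Complex.exp w / (Complex.exp w - 1) ^ 2 - 1 / w ^ 2 =
      -∑' k, coeff k (bernoulliTailSeries ℂ) * w ^ k := by
  have key := exp_sub_one_sq_mul_one_sub_sq_mul_tsum_bernoulliTailSeries hw
  have hE : Complex.exp w - 1 ≠ 0 := fun h => by
    simp [h, hw₀, Complex.exp_ne_zero] at key
  field_simp
  linear_combination -key

open Real Complex

theorem taylor_expansion_near_zero :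
    ∃ r > 0, ∀ z : ℂ, ‖z‖ < r →
      (if z = 0 then (-1 / 12 : ℂ)
        else Complex.exp (2 * (π : ℂ) * z) / (Complex.exp (2 * (π : ℂ) * z) - 1) ^ 2
          - 1 / (2 * (π : ℂ) * z) ^ 2) =
      -∑' k : ℕ, ((bernoulli (k + 2) : ℚ) : ℂ) * (2 * (π : ℂ)) ^ k * z ^ k /
        ((k.factorial : ℂ) * ((k : ℂ) + 2)) := by
  refine ⟨1 / (4 * π), by positivity, fun z hz => ?_⟩
  have hterm (k : ℕ) : ((bernoulli (k + 2) : ℚ) : ℂ) * (2 * (π : ℂ)) ^ k * z ^ k /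
      ((k.factorial : ℂ) * ((k : ℂ) + 2)) =
        coeff k (bernoulliTailSeries ℂ) * (2 * π * z) ^ k := by
    simp only [bernoulliTailSeries, coeff_mk, map_div₀, map_mul, map_add, map_natCast, map_ofNat,
      eq_ratCast, mul_pow]
    ring
  rw [tsum_congr hterm]
  split_ifs with hz₀
  · subst hz₀
    rw [tsum_eq_single 0 fun k hk => by simp [hk]]
    simp [bernoulliTailSeries, bernoulli_two]
    norm_num
  · refine exp_div_exp_sub_one_sq_sub_one_div_sq ?_ (by simp [hz₀, Real.pi_ne_zero])
    rw [norm_mul, norm_mul, Complex.norm_two, Complex.norm_real, Real.norm_of_nonneg pi_pos.le]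
    calc 2 * π * ‖z‖ < 2 * π * (1 / (4 * π)) := by gcongr
      _ = 1 / 2 := by field_simp; ring
end

section
/- For every natural number m ≥ 1, the 2m-th derivative at x = 0 of the function x ↦ e^{2πx}/(e^{2πx} - 1)² - 1/(2πx)² (extended continuously at 0) equals -B_{2m+2} · (2π)^{2m} / (2m+2). -/
/-!
Write `B(t) = t / (eᵗ - 1) = ∑ Bₙ tⁿ / n!` and `g(t) = eᵗ / (eᵗ - 1)² - 1 / t²`, so that
`t² g = B² + t B - 1`. Differentiating `B · (eᵗ - 1) = t` gives the Riccati identity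
`t B' = B - B² - t B`, whence `g = -(d/dt) ((B - 1) / t) = ∑ -(n + 1) B_{n+2} / (n + 2)! tⁿ`.
The recursion for the Bernoulli numbers yields `|Bₙ| ≤ n!`, so every series involved converges
absolutely for `|t| < 1`, and the Taylor coefficients of `x ↦ g(2πx)` at `0` can be read off.
-/

open Real PowerSeries Nat Finset
open scoped NNReal

theorem bernoulli_succ_div_factorial (k : ℕ) :
    bernoulli (k + 1) / (k + 1)! =
      -∑ p ∈ antidiagonal k, bernoulli p.1 / p.1 ! * (1 / (p.2 + 2)!) := by
  have h := congrArg (coeff (k + 2)) (bernoulliPowerSeries_mul_exp_sub_one ℚ)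
  rw [coeff_mul, Nat.sum_antidiagonal_succ', Nat.sum_antidiagonal_succ'] at h
  simpa [bernoulliPowerSeries, coeff_X, eq_neg_iff_add_eq_zero, div_eq_mul_inv, add_assoc] using h

theorem sum_range_one_div_factorial_add_two_le (k : ℕ) :
    ∑ j ∈ range k, (1 / (j + 2)! : ℚ) ≤ 1 - 1 / (k + 1)! := by
  induction k with
  | zero => simp
  | succ k ih =>
    rw [sum_range_succ]
    have : 2 * (1 / (k + 2)! : ℚ) ≤ 1 / (k + 1)! := by
      rw [mul_one_div, div_le_div_iff₀ (by positivity) (by positivity), Nat.factorial_succ (k + 1)]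
      push_cast
      nlinarith [Nat.factorial_pos (k + 1)]
    rw [show k + 1 + 1 = k + 2 from rfl]
    linarith

theorem abs_bernoulli_div_factorial_le_one (n : ℕ) : |bernoulli n / n !| ≤ 1 := by
  induction n using Nat.strong_induction_on with
  | _ n ih =>
  rcases n with _ | k
  · simp
  calc |bernoulli (k + 1) / (k + 1)!|
      ≤ ∑ p ∈ antidiagonal k, |bernoulli p.1 / p.1 !| * (1 / (p.2 + 2)!) := by
        rw [bernoulli_succ_div_factorial, abs_neg]
        refine (abs_sum_le_sum_abs _ _).trans_eq (sum_congr rfl fun p _ => ?_)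
        rw [abs_mul, abs_of_nonneg (by positivity : (0 : ℚ) ≤ 1 / (p.2 + 2)!)]
    _ ≤ ∑ p ∈ antidiagonal k, (1 / (p.2 + 2)! : ℚ) := by
        refine sum_le_sum fun p hp => mul_le_of_le_one_left (by positivity) (ih _ ?_)
        have := mem_antidiagonal.1 hp
        omega
    _ = ∑ j ∈ range (k + 1), (1 / (j + 2)! : ℚ) := by
        rw [← Nat.sum_antidiagonal_swap]
        exact Nat.sum_antidiagonal_eq_sum_range_succ (fun j _ => (1 / (j + 2)! : ℚ)) k
    _ ≤ 1 := by
        have := sum_range_one_div_factorial_add_two_le (k + 1)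
        linarith [show (0 : ℚ) ≤ 1 / (k + 1 + 1)! by positivity]

namespace PowerSeries

section BernoulliSeries

variable (A : Type*) [CommRing A] [Algebra ℚ A]

theorem X_mul_derivative_bernoulliPowerSeries :
    X * d⁄dX A (bernoulliPowerSeries A) =
      bernoulliPowerSeries A - bernoulliPowerSeries A ^ 2 - X * bernoulliPowerSeries A := by
  set P := bernoulliPowerSeries A
  have h : P * (exp A - 1) = X := bernoulliPowerSeries_mul_exp_sub_one A
  have h' : P * exp A + (exp A - 1) * d⁄dX A P = 1 := by
    simpa [derivative_exp, mul_comm] using congrArg (d⁄dX A) h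
  linear_combination (-(d⁄dX A P) - P) * h + P * h'

noncomputable def expDivExpSubOneSqSeries : A⟦X⟧ :=
  mk fun n => -(n + 1) * coeff (n + 2) (bernoulliPowerSeries A)

theorem X_sq_mul_expDivExpSubOneSqSeries :
    X ^ 2 * expDivExpSubOneSqSeries A =
      bernoulliPowerSeries A ^ 2 + X * bernoulliPowerSeries A - 1 := by
  rw [show bernoulliPowerSeries A ^ 2 + X * bernoulliPowerSeries A - 1 =
      bernoulliPowerSeries A - X * d⁄dX A (bernoulliPowerSeries A) - 1 by
    linear_combination X_mul_derivative_bernoulliPowerSeries A]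
  ext (_ | _ | n) <;>
    simp [coeff_X_pow_mul', expDivExpSubOneSqSeries, coeff_succ_X_mul, coeff_derivative,
      bernoulliPowerSeries]
  ring

end BernoulliSeries

theorem hasSum_coeff_mul_mul_pow {R : Type*} [NormedCommRing R] [CompleteSpace R]
    {f g : R⟦X⟧} {t a b : R}
    (hf : Summable fun n => ‖coeff n f * t ^ n‖) (hg : Summable fun n => ‖coeff n g * t ^ n‖)
    (ha : HasSum (fun n => coeff n f * t ^ n) a) (hb : HasSum (fun n => coeff n g * t ^ n) b) :
    HasSum (fun n => coeff n (f * g) * t ^ n) (a * b) := by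
  have hterm : ∀ n, coeff n (f * g) * t ^ n =
      ∑ p ∈ antidiagonal n, (coeff p.1 f * t ^ p.1) * (coeff p.2 g * t ^ p.2) := fun n => by
    rw [coeff_mul, sum_mul]
    refine sum_congr rfl fun p hp => ?_
    rw [← mem_antidiagonal.1 hp, pow_add]
    ring
  simp_rw [hterm]
  rw [← ha.tsum_eq, ← hb.tsum_eq, tsum_mul_tsum_eq_tsum_sum_antidiagonal_of_summable_norm hf hg]
  exact (summable_norm_sum_mul_antidiagonal_of_summable_norm hf hg).of_norm.hasSum

theorem hasSum_coeff_X_pow_mul_pow {R : Type*} [NormedCommRing R] (k : ℕ) (t : R) :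
    HasSum (fun n => coeff n ((X : R⟦X⟧) ^ k) * t ^ n) (t ^ k) := by
  convert hasSum_ite_eq k (t ^ k) using 2 with n
  rw [coeff_X_pow]
  split_ifs <;> simp_all

theorem hasSum_coeff_exp_sub_one_mul_pow (t : ℝ) :
    HasSum (fun n => coeff n (exp ℝ - 1) * t ^ n) (Real.exp t - 1) := by
  have hexp : HasSum (fun n => coeff n (exp ℝ) * t ^ n) (Real.exp t) := by
    rw [Real.exp_eq_exp_ℝ]
    simpa [coeff_exp, div_eq_inv_mul] using NormedSpace.expSeries_div_hasSum_exp t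
  simpa [sub_mul] using hexp.sub (hasSum_coeff_X_pow_mul_pow 0 t)

theorem summable_norm_coeff_mul_pow {f : ℝ⟦X⟧} (hf : ∀ n, |coeff n f| ≤ n + 1) {t : ℝ}
    (ht : |t| < 1) : Summable fun n => ‖coeff n f * t ^ n‖ := by
  have hgeom : Summable fun n : ℕ => ((n : ℝ) + 1) * |t| ^ n := by
    simpa [add_mul] using (summable_pow_mul_geometric_of_norm_lt_one 1 (by simpa using ht)).add
      (summable_geometric_of_lt_one (abs_nonneg t) ht)
  refine hgeom.of_nonneg_of_le (fun n => norm_nonneg _) fun n => ?_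
  rw [norm_mul, norm_pow, Real.norm_eq_abs, Real.norm_eq_abs]
  exact mul_le_mul_of_nonneg_right (hf n) (by positivity)

theorem summable_norm_coeff_mul_pow_of_abs_le_one {f : ℝ⟦X⟧} (hf : ∀ n, |coeff n f| ≤ 1)
    {t : ℝ} (ht : |t| < 1) : Summable fun n => ‖coeff n f * t ^ n‖ :=
  summable_norm_coeff_mul_pow (fun n => (hf n).trans (le_add_of_nonneg_left n.cast_nonneg)) ht

theorem abs_coeff_bernoulliPowerSeries_le_one (n : ℕ) :
    |coeff n (bernoulliPowerSeries ℝ)| ≤ 1 := by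
  simpa [bernoulliPowerSeries] using
    (Rat.cast_le (K := ℝ)).2 (abs_bernoulli_div_factorial_le_one n)

theorem abs_coeff_exp_sub_one_le_one (n : ℕ) : |coeff n (exp ℝ - 1)| ≤ 1 := by
  rcases n with _ | n
  · simp
  · simpa [coeff_exp] using
      inv_le_one_of_one_le₀ (a := ((n + 1)! : ℝ)) (mod_cast (n + 1).factorial_pos)

theorem abs_coeff_X_pow_le_one (k n : ℕ) : |coeff n ((X : ℝ⟦X⟧) ^ k)| ≤ 1 := by
  rw [coeff_X_pow]
  split_ifs <;> norm_num

theorem tsum_coeff_bernoulliPowerSeries_mul_exp_sub_one {t : ℝ} (ht : |t| < 1) :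
    (∑' n, coeff n (bernoulliPowerSeries ℝ) * t ^ n) * (Real.exp t - 1) = t := by
  have hP := summable_norm_coeff_mul_pow_of_abs_le_one abs_coeff_bernoulliPowerSeries_le_one ht
  have := hasSum_coeff_mul_mul_pow hP
    (summable_norm_coeff_mul_pow_of_abs_le_one abs_coeff_exp_sub_one_le_one ht)
    hP.of_norm.hasSum (hasSum_coeff_exp_sub_one_mul_pow t)
  rw [bernoulliPowerSeries_mul_exp_sub_one, ← pow_one X] at this
  exact this.unique (by simpa using hasSum_coeff_X_pow_mul_pow 1 t)

theorem summable_norm_coeff_expDivExpSubOneSqSeries_mul_pow {t : ℝ} (ht : |t| < 1) :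
    Summable fun n => ‖coeff n (expDivExpSubOneSqSeries ℝ) * t ^ n‖ := by
  refine summable_norm_coeff_mul_pow (fun n => ?_) ht
  rw [expDivExpSubOneSqSeries, coeff_mk, abs_mul, abs_neg, abs_of_nonneg (by positivity)]
  exact mul_le_of_le_one_right (by positivity) (abs_coeff_bernoulliPowerSeries_le_one _)

theorem sq_mul_tsum_coeff_expDivExpSubOneSqSeries_mul_pow {t : ℝ} (ht : |t| < 1) :
    t ^ 2 * ∑' n, coeff n (expDivExpSubOneSqSeries ℝ) * t ^ n =
      (∑' n, coeff n (bernoulliPowerSeries ℝ) * t ^ n) ^ 2 +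
        t * (∑' n, coeff n (bernoulliPowerSeries ℝ) * t ^ n) - 1 := by
  have hP := summable_norm_coeff_mul_pow_of_abs_le_one abs_coeff_bernoulliPowerSeries_le_one ht
  have hQ := summable_norm_coeff_expDivExpSubOneSqSeries_mul_pow ht
  have hX (k : ℕ) := summable_norm_coeff_mul_pow_of_abs_le_one (abs_coeff_X_pow_le_one k) ht
  have hleft := hasSum_coeff_mul_mul_pow (hX 2) hQ (hasSum_coeff_X_pow_mul_pow 2 t)
    hQ.of_norm.hasSum
  have hright := ((hasSum_coeff_mul_mul_pow hP hP hP.of_norm.hasSum hP.of_norm.hasSum).add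
    (hasSum_coeff_mul_mul_pow (hX 1) hP (hasSum_coeff_X_pow_mul_pow 1 t) hP.of_norm.hasSum)).sub
    (hasSum_coeff_X_pow_mul_pow 0 t)
  simp only [← add_mul, ← sub_mul, ← map_add, ← map_sub, pow_one, pow_zero, ← sq] at hright
  rw [X_sq_mul_expDivExpSubOneSqSeries] at hleft
  exact hleft.unique hright

theorem hasSum_coeff_expDivExpSubOneSqSeries_mul_pow {t : ℝ} (ht : |t| < 1) :
    HasSum (fun n => coeff n (expDivExpSubOneSqSeries ℝ) * t ^ n)
      (if t = 0 then -1 / 12 else Real.exp t / (Real.exp t - 1) ^ 2 - 1 / t ^ 2) := by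
  split_ifs with h0
  · subst h0
    convert hasSum_single (f := fun n => coeff n (expDivExpSubOneSqSeries ℝ) * (0 : ℝ) ^ n) 0
      fun n hn => by simp [hn] using 1
    norm_num [expDivExpSubOneSqSeries, bernoulliPowerSeries, bernoulli_two]
  · have hQ : HasSum (fun n => coeff n (expDivExpSubOneSqSeries ℝ) * t ^ n)
        (∑' n, coeff n (expDivExpSubOneSqSeries ℝ) * t ^ n) :=
      (summable_norm_coeff_expDivExpSubOneSqSeries_mul_pow ht).of_norm.hasSum
    convert hQ using 1
    have he : Real.exp t - 1 ≠ 0 := sub_ne_zero.2 (by simpa using h0)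
    rw [eq_div_of_mul_eq (pow_ne_zero 2 h0) ((mul_comm _ _).trans
        (sq_mul_tsum_coeff_expDivExpSubOneSqSeries_mul_pow ht)),
      eq_div_of_mul_eq he (tsum_coeff_bernoulliPowerSeries_mul_exp_sub_one ht)]
    field_simp
    ring

end PowerSeries

theorem iteratedDeriv_zero_eq_factorial_mul_of_hasSum {𝕜 : Type*} [RCLike 𝕜] {f : 𝕜 → 𝕜}
    {c : ℕ → 𝕜} {r : ℝ} (hr : 0 < r)
    (hf : ∀ x : 𝕜, ‖x‖ < r → HasSum (fun n => c n * x ^ n) (f x)) (n : ℕ) :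
    iteratedDeriv n f 0 = n ! * c n := by
  lift r to ℝ≥0 using hr.le
  set p := FormalMultilinearSeries.ofScalars 𝕜 c
  have hradius : (r : ENNReal) ≤ p.radius := by
    refine ENNReal.le_of_forall_nnreal_lt fun s hs => p.le_radius_of_tendsto (l := 0) ?_
    have hs : ‖((s : ℝ) : 𝕜)‖ < r := by simpa using hs
    simpa [p, FormalMultilinearSeries.ofScalars_norm] using
      (hf _ hs).summable.tendsto_atTop_zero.norm
  have hp : HasFPowerSeriesOnBall f p 0 r :=
    { r_le := hradius
      r_pos := by exact_mod_cast hr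
      hasSum := fun {y} hy => by
        simpa [p, FormalMultilinearSeries.ofScalars_apply_eq, mul_comm] using
          hf y (by simpa using hy) }
  simpa [p, iteratedDeriv_eq_iteratedFDeriv, FormalMultilinearSeries.ofScalars_apply_eq] using
    (hp.factorial_smul 1 n).symm

theorem iteratedDeriv_exp_function_general (m : ℕ) :
    iteratedDeriv (2 * m)
      (fun x : ℝ => if x = 0 then (-1 / 12 : ℝ)
        else Real.exp (2 * π * x) / (Real.exp (2 * π * x) - 1) ^ 2 - 1 / (2 * π * x) ^ 2) 0 =
      -((bernoulli (2 * m + 2) : ℚ) : ℝ) * (2 * π) ^ (2 * m) / (2 * m + 2) := by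
  have hπ : 0 < 2 * π := by positivity
  rw [iteratedDeriv_zero_eq_factorial_mul_of_hasSum
    (c := fun n => coeff n (expDivExpSubOneSqSeries ℝ) * (2 * π) ^ n) (inv_pos.2 hπ)
    fun x hx => ?_]
  · simp only [expDivExpSubOneSqSeries, bernoulliPowerSeries, coeff_mk, eq_ratCast]
    rw [show 2 * m + 2 = (2 * m + 1) + 1 by ring, Nat.factorial_succ, Nat.factorial_succ]
    push_cast
    field_simp
    ring
  · have hx' : |2 * π * x| < 1 := by
      rw [abs_mul, abs_of_pos hπ, ← lt_div_iff₀' hπ, one_div]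
      exact hx
    simpa [mul_pow, mul_assoc, hπ.ne'] using hasSum_coeff_expDivExpSubOneSqSeries_mul_pow hx'

theorem iteratedDeriv_exp_function (m : ℕ) (hm : 1 ≤ m) :
    iteratedDeriv (2 * m)
      (fun x : ℝ => if x = 0 then (-1 / 12 : ℝ)
        else Real.exp (2 * π * x) / (Real.exp (2 * π * x) - 1) ^ 2 - 1 / (2 * π * x) ^ 2) 0 =
      -((bernoulli (2 * m + 2) : ℚ) : ℝ) * (2 * π) ^ (2 * m) / (2 * m + 2) :=
  iteratedDeriv_exp_function_general m
end

section
/- For every real w > 0 with w ≠ 1: (∑_{n∈ℤ} 1/z_n)² - 2·∑_{n<m} 1/(z_n z_m) = ∑_{n∈ℤ} 1/z_n², where z_n = log w + 2πin, and this common value equals 1/(log w)² + 2∑_{n=1}^∞ ((log w)² - 4π²n²)/((log w)² + 4π²n²)². -/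
/-!
Write `z_n = log w + 2πin`. Since `z_{-n} = conj z_n`, pairing `n` with `-n` gives
`1/z_n + 1/z_{-n} = 2 Re z_n / |z_n|²` and `1/z_n² + 1/z_{-n}² = 2 Re z_n² / |z_n|⁴`,
both `O(1/n²)`, so the symmetric partial sums of both series converge, the second one to the
stated real series. On each window `[-N, N]` the finite Newton identity
`(∑ aᵢ)² - 2 ∑_{i<j} aᵢ aⱼ = ∑ aᵢ²` holds exactly, so the sum over pairs converges too and the
identity passes to the limit.
-/

open Real Complex Filter Topology Finset ComplexConjugate

theorem Finset.sq_sum_eq_sum_sq_add_two_mul_sum_lt {ι R : Type*} [LinearOrder ι] [CommSemiring R]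
    (s : Finset ι) (f : ι → R) :
    (∑ i ∈ s, f i) ^ 2 = ∑ i ∈ s, f i ^ 2 + 2 * ∑ p ∈ s ×ˢ s with p.1 < p.2, f p.1 * f p.2 := by
  have hswap : ∑ p ∈ s ×ˢ s with p.2 < p.1, f p.1 * f p.2
      = ∑ p ∈ s ×ˢ s with p.1 < p.2, f p.1 * f p.2 :=
    sum_equiv (Equiv.prodComm ι ι) (by simp [and_comm]) fun _ _ => mul_comm _ _
  have hoff : s.offDiag = {p ∈ s ×ˢ s | p.1 < p.2} ∪ {p ∈ s ×ˢ s | p.2 < p.1} := by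
    ext p
    simp only [mem_offDiag, mem_union, mem_filter, mem_product]
    grind
  calc (∑ i ∈ s, f i) ^ 2 = ∑ p ∈ s.diag ∪ s.offDiag, f p.1 * f p.2 := by
        rw [diag_union_offDiag, sq, sum_mul_sum, sum_product]
    _ = _ := by
        rw [sum_union (disjoint_diag_offDiag _), sum_diag, hoff,
          sum_union (disjoint_filter.2 fun p _ h => h.not_gt), hswap, two_mul]
        simp only [sq]

theorem Finset.sum_Icc_neg_eq_add_sum_range {M : Type*} [AddCommMonoid M] (f : ℤ → M) (N : ℕ) :
    ∑ n ∈ Icc (-(N : ℤ)) N, f n = f 0 + ∑ k ∈ range N, (f (k + 1) + f (-(k + 1))) := by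
  induction N with
  | zero => simp
  | succ N ih =>
    rw [Nat.cast_succ, Icc_succ_succ, sum_union (by simp), sum_pair (by lia), ih, sum_range_succ,
      neg_add]
    abel

theorem tendsto_sum_Icc_neg_of_hasSum {M : Type*} [AddCommMonoid M] [TopologicalSpace M]
    [ContinuousAdd M] {f : ℤ → M} {a : M} (h : HasSum (fun k : ℕ => f (k + 1) + f (-(k + 1))) a) :
    Tendsto (fun N : ℕ => ∑ n ∈ Icc (-(N : ℤ)) N, f n) atTop (𝓝 (f 0 + a)) := by
  simpa only [sum_Icc_neg_eq_add_sum_range] using (h.tendsto_sum_nat.const_add (f 0))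

theorem summable_of_norm_le_div_sq_succ {E : Type*} [NormedAddCommGroup E] [CompleteSpace E]
    {f : ℕ → E} {C : ℝ} (hf : ∀ k : ℕ, ‖f k‖ ≤ C / ((k : ℝ) + 1) ^ 2) : Summable f := by
  refine Summable.of_norm_bounded ?_ hf
  have := (summable_nat_add_iff 1).mpr (Real.summable_one_div_nat_pow.mpr one_lt_two)
  simpa [div_eq_mul_one_div C] using this.mul_left C

theorem Complex.inv_add_inv_conj (z : ℂ) : z⁻¹ + (conj z)⁻¹ = (2 * z.re / normSq z : ℝ) := by
  rw [← map_inv₀, add_conj, inv_re, mul_div_assoc]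

theorem Filter.Tendsto.sum_filter_lt_mul {𝕜 ι α : Type*} [Field 𝕜] [TopologicalSpace 𝕜]
    [IsTopologicalRing 𝕜] [NeZero (2 : 𝕜)] [LinearOrder ι] {l : Filter α} {s : α → Finset ι}
    {f : ι → 𝕜} {S Q : 𝕜} (hS : Tendsto (fun a => ∑ i ∈ s a, f i) l (𝓝 S))
    (hQ : Tendsto (fun a => ∑ i ∈ s a, f i ^ 2) l (𝓝 Q)) :
    Tendsto (fun a => ∑ p ∈ s a ×ˢ s a with p.1 < p.2, f p.1 * f p.2) l (𝓝 ((S ^ 2 - Q) / 2)) := by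
  refine (((hS.pow 2).sub hQ).div_const 2).congr fun a => ?_
  rw [sq_sum_eq_sum_sq_add_two_mul_sum_lt, add_sub_cancel_left,
    mul_div_cancel_left₀ _ two_ne_zero]

noncomputable def logBranch (L : ℝ) (n : ℤ) : ℂ := L + 2 * π * I * n

section logBranch

variable (L : ℝ)

@[simp]
theorem logBranch_zero : logBranch L 0 = L := by simp [logBranch]

@[simp]
theorem logBranch_re (n : ℤ) : (logBranch L n).re = L := by simp [logBranch]

@[simp]
theorem logBranch_im (n : ℤ) : (logBranch L n).im = 2 * π * n := by simp [logBranch]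

theorem logBranch_neg (n : ℤ) : logBranch L (-n) = conj (logBranch L n) := by
  apply Complex.ext <;> simp

theorem normSq_logBranch (n : ℤ) : normSq (logBranch L n) = L ^ 2 + 4 * π ^ 2 * n ^ 2 := by
  rw [normSq_apply, logBranch_re, logBranch_im]
  ring

theorem div_normSq_logBranch_le {C : ℝ} (hC : 0 ≤ C) (n : ℤ) (hn : n ≠ 0) :
    C / normSq (logBranch L n) ≤ C / (n : ℝ) ^ 2 := by
  refine div_le_div_of_nonneg_left hC (by positivity) ?_
  have h4π : 1 ≤ 4 * π ^ 2 := by nlinarith [pi_gt_three]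
  rw [normSq_logBranch]
  nlinarith [mul_le_mul_of_nonneg_right h4π (sq_nonneg (n : ℝ)), sq_nonneg L]

theorem inv_logBranch_add_inv_logBranch_neg (n : ℤ) :
    (logBranch L n)⁻¹ + (logBranch L (-n))⁻¹ = (2 * L / normSq (logBranch L n) : ℝ) := by
  rw [logBranch_neg, inv_add_inv_conj, logBranch_re]

theorem inv_sq_logBranch_add_inv_sq_logBranch_neg (n : ℤ) :
    (logBranch L n ^ 2)⁻¹ + (logBranch L (-n) ^ 2)⁻¹
      = (2 * ((L ^ 2 - 4 * π ^ 2 * n ^ 2) / (L ^ 2 + 4 * π ^ 2 * n ^ 2) ^ 2) : ℝ) := by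
  rw [logBranch_neg, ← map_pow, inv_add_inv_conj, map_pow, normSq_logBranch, sq (logBranch L n),
    mul_re, logBranch_re, logBranch_im]
  ring_nf

theorem norm_inv_sq_logBranch_add_inv_sq_logBranch_neg_le (n : ℤ) :
    ‖(logBranch L n ^ 2)⁻¹ + (logBranch L (-n) ^ 2)⁻¹‖ ≤ 2 / normSq (logBranch L n) := by
  refine (norm_add_le _ _).trans_eq ?_
  rw [logBranch_neg, norm_inv, norm_inv, norm_pow, norm_pow, norm_conj, Complex.sq_norm]
  ring

theorem exists_tendsto_sum_Icc_one_div_logBranch :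
    ∃ S : ℂ, Tendsto (fun N : ℕ => ∑ n ∈ Icc (-(N : ℤ)) N, 1 / logBranch L n) atTop (𝓝 S) := by
  have hpairs : Summable fun k : ℕ =>
      1 / logBranch L ((k : ℤ) + 1) + 1 / logBranch L (-((k : ℤ) + 1)) := by
    refine summable_of_norm_le_div_sq_succ (C := 2 * |L|) fun k => ?_
    rw [one_div, one_div, inv_logBranch_add_inv_logBranch_neg, norm_real, norm_div, norm_mul,
      Real.norm_two, norm_eq_abs, norm_of_nonneg (normSq_nonneg _)]
    exact_mod_cast div_normSq_logBranch_le L (by positivity) ((k : ℤ) + 1) (by lia)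
  exact ⟨_, tendsto_sum_Icc_neg_of_hasSum hpairs.hasSum⟩

theorem tendsto_sum_Icc_one_div_logBranch_sq :
    Tendsto (fun N : ℕ => ∑ n ∈ Icc (-(N : ℤ)) N, 1 / logBranch L n ^ 2) atTop
      (𝓝 (1 / (L : ℂ) ^ 2 + 2 * ((∑' k : ℕ, (L ^ 2 - 4 * π ^ 2 * ((k : ℝ) + 1) ^ 2) /
          (L ^ 2 + 4 * π ^ 2 * ((k : ℝ) + 1) ^ 2) ^ 2 : ℝ) : ℂ))) := by
  have hpairs : Summable fun k : ℕ =>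
      1 / logBranch L ((k : ℤ) + 1) ^ 2 + 1 / logBranch L (-((k : ℤ) + 1)) ^ 2 := by
    refine summable_of_norm_le_div_sq_succ (C := 2) fun k => ?_
    have := (norm_inv_sq_logBranch_add_inv_sq_logBranch_neg_le L _).trans
      (div_normSq_logBranch_le L zero_le_two ((k : ℤ) + 1) (by lia))
    push_cast at this
    simpa only [one_div] using this
  convert tendsto_sum_Icc_neg_of_hasSum (f := fun n => 1 / logBranch L n ^ 2) hpairs.hasSum
    using 2
  simp_rw [logBranch_zero, one_div, inv_sq_logBranch_add_inv_sq_logBranch_neg, ← ofReal_tsum,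
    tsum_mul_left]
  push_cast
  rfl

end logBranch

theorem newton_identity_for_zeros_general (w : ℝ) :
    ∃ S₁ S₂ Q : ℂ,
      Tendsto (fun N : ℕ => ∑ n ∈ Finset.Icc (-(N : ℤ)) (N : ℤ),
          1 / ((Real.log w : ℂ) + 2 * (π : ℂ) * Complex.I * (n : ℂ))) atTop (nhds S₁) ∧
      Tendsto (fun N : ℕ => ∑ p ∈ (Finset.Icc (-(N : ℤ)) (N : ℤ) ×ˢ
            Finset.Icc (-(N : ℤ)) (N : ℤ)).filter (fun p => p.1 < p.2),
          1 / (((Real.log w : ℂ) + 2 * (π : ℂ) * Complex.I * (p.1 : ℂ)) *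
            ((Real.log w : ℂ) + 2 * (π : ℂ) * Complex.I * (p.2 : ℂ)))) atTop (nhds S₂) ∧
      Tendsto (fun N : ℕ => ∑ n ∈ Finset.Icc (-(N : ℤ)) (N : ℤ),
          1 / ((Real.log w : ℂ) + 2 * (π : ℂ) * Complex.I * (n : ℂ)) ^ 2) atTop (nhds Q) ∧
      S₁ ^ 2 - 2 * S₂ = Q ∧
      Q = 1 / ((Real.log w : ℂ)) ^ 2 + 2 * ((∑' n : ℕ,
        ((Real.log w) ^ 2 - 4 * π ^ 2 * ((n : ℝ) + 1) ^ 2) /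
          ((Real.log w) ^ 2 + 4 * π ^ 2 * ((n : ℝ) + 1) ^ 2) ^ 2 : ℝ) : ℂ) := by
  obtain ⟨S₁, hS₁⟩ := exists_tendsto_sum_Icc_one_div_logBranch (Real.log w)
  have hQ := tendsto_sum_Icc_one_div_logBranch_sq (Real.log w)
  have hS₂ := hS₁.sum_filter_lt_mul (by simpa only [one_div_pow] using hQ)
  simp only [one_div_mul_one_div] at hS₂
  exact ⟨S₁, _, _, hS₁, hS₂, hQ, by ring, rfl⟩

theorem newton_identity_for_zeros (w : ℝ) (hw : 0 < w) (hw1 : w ≠ 1) :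
    ∃ S₁ S₂ Q : ℂ,
      Tendsto (fun N : ℕ => ∑ n ∈ Finset.Icc (-(N : ℤ)) (N : ℤ),
          1 / ((Real.log w : ℂ) + 2 * (π : ℂ) * Complex.I * (n : ℂ))) atTop (nhds S₁) ∧
      Tendsto (fun N : ℕ => ∑ p ∈ (Finset.Icc (-(N : ℤ)) (N : ℤ) ×ˢ
            Finset.Icc (-(N : ℤ)) (N : ℤ)).filter (fun p => p.1 < p.2),
          1 / (((Real.log w : ℂ) + 2 * (π : ℂ) * Complex.I * (p.1 : ℂ)) *
            ((Real.log w : ℂ) + 2 * (π : ℂ) * Complex.I * (p.2 : ℂ)))) atTop (nhds S₂) ∧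
      Tendsto (fun N : ℕ => ∑ n ∈ Finset.Icc (-(N : ℤ)) (N : ℤ),
          1 / ((Real.log w : ℂ) + 2 * (π : ℂ) * Complex.I * (n : ℂ)) ^ 2) atTop (nhds Q) ∧
      S₁ ^ 2 - 2 * S₂ = Q ∧
      Q = 1 / ((Real.log w : ℂ)) ^ 2 + 2 * ((∑' n : ℕ,
        ((Real.log w) ^ 2 - 4 * π ^ 2 * ((n : ℝ) + 1) ^ 2) /
          ((Real.log w) ^ 2 + 4 * π ^ 2 * ((n : ℝ) + 1) ^ 2) ^ 2 : ℝ) : ℂ) :=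
  newton_identity_for_zeros_general w
end
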